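/- Let p be a prime with p > 3. Then W_3 = {4p−2, 2p²−4p, 2p²+2p−2, 2p³−2p²−2p−2} ∪ { p^n(2p−2) + 2p : n ≥ 2 } ∪ { p^n(2p−2) + 2p²−2p−2 : n ≥ 3 } ∪ { p^n·λ + 2p−2 : n ≥ 2, λ ∈ W_2 }. -/

import Mathlib

/-- The shift `λ ∥ n` of a weight `λ` linked to zero (i.e. `λ ≡ 0` or `λ ≡ 2p−2 mod 2p`). -/
def shift (p lam n : ℕ) : ℕ :=
  if lam % (2 * p) = 0 then
    (if Even n then p * (lam + n) else p * (lam + n) + p - 2)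
  else
    (if Even n then p * (lam - n) else p * (lam - n) + p - 2)

/-- The sets `W_q` of maximally untwisted `q`-cohomological weights, defined recursively:
`W_0 = {0}` and `W_q = { (p^n · λᵢ) ∥ (q−i) : n ≥ 0, 0 ≤ i < q, λᵢ ∈ W_i }`. -/
def W (p : ℕ) : ℕ → Set ℕ
  | 0 => {0}
  | q + 1 => {mu | ∃ (n i : ℕ) (_ : i < q + 1) (lam : ℕ),
      lam ∈ W p i ∧ mu = shift p (p ^ n * lam) (q + 1 - i)}

/-! Weights of `W_1` and `W_2` are even, so once twisted by a positive power of `p` they are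
`≡ 0 (mod 2p)` and `(pⁿλ) ∥ k` is `pⁿ⁺¹λ + 2p − 2` or `pⁿ⁺¹λ + 2p` for `k = 1, 2`. Untwisted, the
nonzero ones are `≡ −2 (mod 2p)`, which gives `λ ∥ 1 = pλ − 2` and `λ ∥ 2 = pλ − 2p`. With these two
rules `W_1`, `W_2` and then `W_3` are computed by a finite case analysis on the weight and on
whether the twist exponent vanishes. -/

section Shift

variable {p lam k : ℕ}

lemma shift_of_dvd_of_even (h : 2 * p ∣ lam) (hk : Even k) : shift p lam k = p * (lam + k) := by
  rw [shift, if_pos (Nat.dvd_iff_mod_eq_zero.mp h), if_pos hk]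

lemma shift_of_dvd_of_odd (h : 2 * p ∣ lam) (hk : ¬Even k) :
    shift p lam k = p * (lam + k) + p - 2 := by
  rw [shift, if_pos (Nat.dvd_iff_mod_eq_zero.mp h), if_neg hk]

lemma shift_of_not_dvd_of_even (h : ¬2 * p ∣ lam) (hk : Even k) :
    shift p lam k = p * (lam - k) := by
  rw [shift, if_neg (mt Nat.dvd_iff_mod_eq_zero.mpr h), if_pos hk]

lemma shift_of_not_dvd_of_odd (h : ¬2 * p ∣ lam) (hk : ¬Even k) :
    shift p lam k = p * (lam - k) + p - 2 := by
  rw [shift, if_neg (mt Nat.dvd_iff_mod_eq_zero.mpr h), if_neg hk]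

lemma shift_one_of_dvd (h : 2 * p ∣ lam) : shift p lam 1 = p * lam + 2 * p - 2 := by
  rw [shift_of_dvd_of_odd h (by decide), mul_add_one]
  omega

lemma shift_two_of_dvd (h : 2 * p ∣ lam) : shift p lam 2 = p * lam + 2 * p := by
  rw [shift_of_dvd_of_even h (by decide), mul_add, mul_comm p 2]

lemma shift_one_of_not_dvd (h : ¬2 * p ∣ lam) : shift p lam 1 = p * lam - 2 := by
  have hlam : lam ≠ 0 := by rintro rfl; exact h (dvd_zero _)
  rw [shift_of_not_dvd_of_odd h (by decide), Nat.mul_sub_one]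
  have : p ≤ p * lam := Nat.le_mul_of_pos_right p (Nat.pos_of_ne_zero hlam)
  omega

lemma shift_two_of_not_dvd (h : ¬2 * p ∣ lam) : shift p lam 2 = p * lam - 2 * p := by
  rw [shift_of_not_dvd_of_even h (by decide), Nat.mul_sub, mul_comm p 2]

lemma two_mul_dvd_pow_mul_of_even {n : ℕ} (he : Even lam) (hn : n ≠ 0) : 2 * p ∣ p ^ n * lam := by
  obtain ⟨m, rfl⟩ := Nat.exists_eq_succ_of_ne_zero hn
  obtain ⟨c, rfl⟩ := he.two_dvd
  exact ⟨p ^ m * c, by rw [pow_succ]; ring⟩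

lemma shift_pow_mul_one {n : ℕ} (he : Even lam) (hn : n ≠ 0) :
    shift p (p ^ n * lam) 1 = p ^ (n + 1) * lam + 2 * p - 2 := by
  rw [shift_one_of_dvd (two_mul_dvd_pow_mul_of_even he hn), pow_succ', mul_assoc]

lemma shift_pow_mul_two {n : ℕ} (he : Even lam) (hn : n ≠ 0) :
    shift p (p ^ n * lam) 2 = p ^ (n + 1) * lam + 2 * p := by
  rw [shift_two_of_dvd (two_mul_dvd_pow_mul_of_even he hn), pow_succ', mul_assoc]

lemma not_two_mul_dvd_of_dvd_add_two (hp : 2 ≤ p) (h : 2 * p ∣ lam + 2) : ¬2 * p ∣ lam :=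
  fun hlam => by
    have := Nat.le_of_dvd two_pos ((Nat.dvd_add_right hlam).mp h)
    omega

lemma even_two_mul_sub_two : Even (2 * p - 2) := ⟨p - 1, by omega⟩

lemma not_two_mul_dvd_two_mul_sub_two (hp : 2 ≤ p) : ¬2 * p ∣ 2 * p - 2 :=
  not_two_mul_dvd_of_dvd_add_two hp (by rw [Nat.sub_add_cancel (by omega)])

lemma mul_two_mul_sub_two : p * (2 * p - 2) = 2 * p ^ 2 - 2 * p := by
  rw [Nat.mul_sub, mul_left_comm, ← sq, mul_comm p 2]

lemma shift_zero_three : shift p 0 3 = 4 * p - 2 := by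
  rw [shift_of_dvd_of_odd (dvd_zero _) (by decide)]
  omega

lemma shift_two_mul_sub_two_two (hp : 2 ≤ p) : shift p (2 * p - 2) 2 = 2 * p ^ 2 - 4 * p := by
  rw [shift_two_of_not_dvd (not_two_mul_dvd_two_mul_sub_two hp), mul_two_mul_sub_two]
  omega

lemma shift_two_mul_one : shift p (2 * p) 1 = 2 * p ^ 2 + 2 * p - 2 := by
  rw [shift_one_of_dvd dvd_rfl, mul_left_comm, ← sq]

lemma shift_two_mul_sq_sub_one (hp : 2 ≤ p) :
    shift p (2 * p ^ 2 - 2 * p - 2) 1 = 2 * p ^ 3 - 2 * p ^ 2 - 2 * p - 2 := by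
  have hsq : 2 * p + 2 ≤ 2 * p ^ 2 := by nlinarith
  have hdvd : 2 * p ∣ 2 * p ^ 2 - 2 * p - 2 + 2 :=
    ⟨p - 1, by rw [Nat.mul_sub, mul_assoc, ← sq]; omega⟩
  rw [shift_one_of_not_dvd (not_two_mul_dvd_of_dvd_add_two hp hdvd), Nat.mul_sub, Nat.mul_sub]
  ring_nf

lemma shift_pow_mul_add_one (hp : 2 ≤ p) {m : ℕ} (hm : m ≠ 0) :
    shift p (p ^ m * (2 * p - 2) + (2 * p - 2)) 1
      = p ^ (m + 1) * (2 * p - 2) + (2 * p ^ 2 - 2 * p - 2) := by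
  have hsq : 2 * p + 2 ≤ 2 * p ^ 2 := by nlinarith
  have hdvd : 2 * p ∣ p ^ m * (2 * p - 2) + (2 * p - 2) + 2 := by
    rw [add_assoc, Nat.sub_add_cancel (by omega)]
    exact dvd_add (two_mul_dvd_pow_mul_of_even even_two_mul_sub_two hm) dvd_rfl
  rw [shift_one_of_not_dvd (not_two_mul_dvd_of_dvd_add_two hp hdvd), mul_add, ← mul_assoc,
    ← pow_succ', mul_two_mul_sub_two]
  omega

end Shift

section Weights

variable {p : ℕ}

lemma mem_W_succ {q mu : ℕ} :
    mu ∈ W p (q + 1) ↔ ∃ (n i : ℕ) (_ : i < q + 1) (lam : ℕ),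
      lam ∈ W p i ∧ mu = shift p (p ^ n * lam) (q + 1 - i) := by
  rw [W]; rfl

lemma mem_W_zero {lam : ℕ} : lam ∈ W p 0 ↔ lam = 0 := by rw [W]; rfl

lemma W_one : W p 1 = {2 * p - 2} := by
  ext mu
  rw [mem_W_succ, Set.mem_singleton_iff]
  constructor
  · rintro ⟨n, i, hi, lam, hlam, rfl⟩
    obtain rfl : i = 0 := by omega
    obtain rfl := mem_W_zero.mp hlam
    rw [mul_zero, shift_one_of_dvd (dvd_zero _)]
    omega
  · rintro rfl
    refine ⟨0, 0, one_pos, 0, mem_W_zero.mpr rfl, ?_⟩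
    rw [mul_zero, shift_one_of_dvd (dvd_zero _)]
    omega

lemma two_mul_sub_two_mem_W_one : 2 * p - 2 ∈ W p 1 := by
  rw [W_one]; rfl

lemma mem_W_two (hp : 2 ≤ p) {lam : ℕ} :
    lam ∈ W p 2 ↔ lam = 2 * p ∨ lam = 2 * p ^ 2 - 2 * p - 2 ∨
      ∃ m, 2 ≤ m ∧ lam = p ^ m * (2 * p - 2) + (2 * p - 2) := by
  rw [mem_W_succ]
  constructor
  · rintro ⟨n, i, hi, mu, hmu, rfl⟩
    interval_cases i
    · obtain rfl := mem_W_zero.mp hmu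
      left
      rw [mul_zero, shift_two_of_dvd (dvd_zero _), mul_zero, zero_add]
    · obtain rfl : mu = 2 * p - 2 := by rwa [W_one] at hmu
      right
      obtain rfl | hn := eq_or_ne n 0
      · left
        rw [pow_zero, one_mul, shift_one_of_not_dvd (not_two_mul_dvd_two_mul_sub_two hp),
          mul_two_mul_sub_two]
      · right
        refine ⟨n + 1, by omega, ?_⟩
        rw [shift_pow_mul_one even_two_mul_sub_two hn]
        omega
  · rintro (rfl | rfl | ⟨m, hm, rfl⟩)
    · refine ⟨0, 0, two_pos, 0, mem_W_zero.mpr rfl, ?_⟩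
      rw [mul_zero, shift_two_of_dvd (dvd_zero _), mul_zero, zero_add]
    · refine ⟨0, 1, one_lt_two, 2 * p - 2, two_mul_sub_two_mem_W_one, ?_⟩
      rw [pow_zero, one_mul, shift_one_of_not_dvd (not_two_mul_dvd_two_mul_sub_two hp),
        mul_two_mul_sub_two]
    · refine ⟨m - 1, 1, one_lt_two, 2 * p - 2, two_mul_sub_two_mem_W_one, ?_⟩
      rw [shift_pow_mul_one even_two_mul_sub_two (by omega), Nat.sub_add_cancel (by omega)]
      omega

lemma even_of_mem_W_two (hp : 2 ≤ p) {lam : ℕ} (h : lam ∈ W p 2) : Even lam := by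
  rcases (mem_W_two hp).mp h with rfl | rfl | ⟨m, -, rfl⟩
  · exact even_two_mul p
  · rw [Nat.even_iff]; omega
  · exact (even_two_mul_sub_two.mul_left _).add even_two_mul_sub_two

lemma shift_pow_mul_of_mem_W_one (hp : 2 ≤ p) (n : ℕ) {lam : ℕ} (h : lam ∈ W p 1) :
    shift p (p ^ n * lam) 2 = 2 * p ^ 2 - 4 * p ∨
      ∃ m, 2 ≤ m ∧ shift p (p ^ n * lam) 2 = p ^ m * (2 * p - 2) + 2 * p := by
  obtain rfl : lam = 2 * p - 2 := by rwa [W_one] at h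
  obtain rfl | hn := eq_or_ne n 0
  · exact .inl <| by rw [pow_zero, one_mul, shift_two_mul_sub_two_two hp]
  · exact .inr ⟨n + 1, by omega, shift_pow_mul_two even_two_mul_sub_two hn⟩

lemma shift_pow_mul_of_mem_W_two (hp : 2 ≤ p) (n : ℕ) {lam : ℕ} (h : lam ∈ W p 2) :
    (shift p (p ^ n * lam) 1 = 2 * p ^ 2 + 2 * p - 2 ∨
      shift p (p ^ n * lam) 1 = 2 * p ^ 3 - 2 * p ^ 2 - 2 * p - 2) ∨
    (∃ m, 3 ≤ m ∧ shift p (p ^ n * lam) 1 = p ^ m * (2 * p - 2) + (2 * p ^ 2 - 2 * p - 2)) ∨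
    ∃ m, 2 ≤ m ∧ ∃ mu ∈ W p 2, shift p (p ^ n * lam) 1 = p ^ m * mu + (2 * p - 2) := by
  obtain rfl | hn := eq_or_ne n 0
  · rw [pow_zero, one_mul]
    rcases (mem_W_two hp).mp h with rfl | rfl | ⟨m, hm, rfl⟩
    · exact .inl <| .inl shift_two_mul_one
    · exact .inl <| .inr <| shift_two_mul_sq_sub_one hp
    · exact .inr <| .inl ⟨m + 1, by omega, shift_pow_mul_add_one hp (by omega)⟩
  · refine .inr <| .inr ⟨n + 1, by omega, lam, h, ?_⟩
    rw [shift_pow_mul_one (even_of_mem_W_two hp h) hn]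
    omega

end Weights

theorem stmt_5_general (p : ℕ) (hp : p.Prime) :
    W p 3 = ({4 * p - 2, 2 * p ^ 2 - 4 * p, 2 * p ^ 2 + 2 * p - 2,
        2 * p ^ 3 - 2 * p ^ 2 - 2 * p - 2} : Set ℕ)
      ∪ {x | ∃ n : ℕ, 2 ≤ n ∧ x = p ^ n * (2 * p - 2) + 2 * p}
      ∪ {x | ∃ n : ℕ, 3 ≤ n ∧ x = p ^ n * (2 * p - 2) + (2 * p ^ 2 - 2 * p - 2)}
      ∪ {x | ∃ n : ℕ, 2 ≤ n ∧ ∃ lam ∈ W p 2, x = p ^ n * lam + (2 * p - 2)} := by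
  have hp2 := hp.two_le
  ext mu
  rw [mem_W_succ]
  simp only [Set.mem_union, Set.mem_insert_iff, Set.mem_singleton_iff, Set.mem_ofPred_eq]
  constructor
  · rintro ⟨n, i, hi, lam, hlam, rfl⟩
    interval_cases i
    · obtain rfl := mem_W_zero.mp hlam
      exact .inl <| .inl <| .inl <| .inl <| by rw [mul_zero, shift_zero_three]
    · rcases shift_pow_mul_of_mem_W_one hp2 n hlam with h | h
      · exact .inl <| .inl <| .inl <| .inr <| .inl h
      · exact .inl <| .inl <| .inr h
    · rcases shift_pow_mul_of_mem_W_two hp2 n hlam with (h | h) | h | h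
      · exact .inl <| .inl <| .inl <| .inr <| .inr <| .inl h
      · exact .inl <| .inl <| .inl <| .inr <| .inr <| .inr h
      · exact .inl <| .inr h
      · exact .inr h
  · rintro ((((rfl | rfl | rfl | rfl) | ⟨n, hn, rfl⟩) | ⟨n, hn, rfl⟩) | ⟨n, hn, lam, hlam, rfl⟩)
    · exact ⟨0, 0, by norm_num, 0, mem_W_zero.mpr rfl, by rw [mul_zero, shift_zero_three]⟩
    · exact ⟨0, 1, by norm_num, 2 * p - 2, two_mul_sub_two_mem_W_one, by
        rw [pow_zero, one_mul, shift_two_mul_sub_two_two hp2]⟩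
    · exact ⟨0, 2, by norm_num, 2 * p, (mem_W_two hp2).mpr (.inl rfl), by
        rw [pow_zero, one_mul, shift_two_mul_one]⟩
    · exact ⟨0, 2, by norm_num, _, (mem_W_two hp2).mpr (.inr (.inl rfl)), by
        rw [pow_zero, one_mul, shift_two_mul_sq_sub_one hp2]⟩
    · refine ⟨n - 1, 1, by norm_num, 2 * p - 2, two_mul_sub_two_mem_W_one, ?_⟩
      rw [shift_pow_mul_two even_two_mul_sub_two (by omega), Nat.sub_add_cancel (by omega)]
    · refine ⟨0, 2, by norm_num, _, (mem_W_two hp2).mpr (.inr (.inr ⟨n - 1, by omega, rfl⟩)), ?_⟩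
      rw [pow_zero, one_mul, shift_pow_mul_add_one hp2 (by omega), Nat.sub_add_cancel (by omega)]
    · refine ⟨n - 1, 2, by norm_num, lam, hlam, ?_⟩
      rw [shift_pow_mul_one (even_of_mem_W_two hp2 hlam) (by omega), Nat.sub_add_cancel (by omega)]
      omega

/-- For a prime `p > 3`,
`W_3 = {4p−2, 2p²−4p, 2p²+2p−2, 2p³−2p²−2p−2} ∪ { pⁿ(2p−2)+2p : n ≥ 2 }`
`∪ { pⁿ(2p−2)+2p²−2p−2 : n ≥ 3 } ∪ { pⁿ·λ + 2p−2 : n ≥ 2, λ ∈ W_2 }`. -/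
theorem stmt_5 (p : ℕ) (hp : p.Prime) (h3 : 3 < p) :
    W p 3 = ({4 * p - 2, 2 * p ^ 2 - 4 * p, 2 * p ^ 2 + 2 * p - 2,
        2 * p ^ 3 - 2 * p ^ 2 - 2 * p - 2} : Set ℕ)
      ∪ {x | ∃ n : ℕ, 2 ≤ n ∧ x = p ^ n * (2 * p - 2) + 2 * p}
      ∪ {x | ∃ n : ℕ, 3 ≤ n ∧ x = p ^ n * (2 * p - 2) + (2 * p ^ 2 - 2 * p - 2)}
      ∪ {x | ∃ n : ℕ, 2 ≤ n ∧ ∃ lam ∈ W p 2, x = p ^ n * lam + (2 * p - 2)} :=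
  stmt_5_general p hp
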